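/- Let n ≥ 1 and a = (1/2)[[0, −I_n],[I_n, 0]] ∈ sp(n). For smooth maps X, Y : ℝ² → Sym(n,ℝ) (real symmetric n×n matrices), let u = i[[X, Y],[Y, −X]] in block form (a purely imaginary element of sp(n)). Then u satisfies u_t = [a, u_xx] − (1/2)[u, [u, [a, u]]] if and only if X_t = −Y_xx − [X,[X,Y]] − 2Y³ − Y X² − X² Y and Y_t = X_xx − [Y,[X,Y]] + 2X³ + X Y² + Y² X. -/

import Mathlib

open Matrix
open scoped ContDiff

attribute [local instance] Matrix.frobeniusNormedAddCommGroup Matrix.frobeniusNormedSpace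

private lemma blk1 {n : ℕ} (P Q : Matrix (Fin n) (Fin n) ℂ) :
    (fromBlocks 0 (-1) 1 0 : Matrix (Fin n ⊕ Fin n) (Fin n ⊕ Fin n) ℂ) *
        fromBlocks P Q Q (-P) -
      fromBlocks P Q Q (-P) * fromBlocks 0 (-1) 1 0 =
    (2 : ℂ) • fromBlocks (-Q) P P Q := by
  simp only [fromBlocks_multiply, fromBlocks_smul, sub_eq_add_neg, fromBlocks_neg,
    fromBlocks_add, fromBlocks_inj, two_smul]
  refine ⟨?_, ?_, ?_, ?_⟩ <;> noncomm_ring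

private lemma blk2 {n : ℕ} (A B : Matrix (Fin n) (Fin n) ℂ) :
    fromBlocks A B B (-A) * fromBlocks (-B) A A B -
      fromBlocks (-B) A A B * fromBlocks A B B (-A) =
    (2 : ℂ) • fromBlocks (-(A*B - B*A)) (A*A + B*B) (-(A*A + B*B)) (-(A*B - B*A)) := by
  simp only [fromBlocks_multiply, fromBlocks_smul, sub_eq_add_neg, fromBlocks_neg,
    fromBlocks_add, fromBlocks_inj, two_smul]
  refine ⟨?_, ?_, ?_, ?_⟩ <;> noncomm_ring

private lemma blk3 {n : ℕ} (A B : Matrix (Fin n) (Fin n) ℂ) :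
    fromBlocks A B B (-A) * fromBlocks (-(A*B - B*A)) (A*A + B*B) (-(A*A + B*B)) (-(A*B - B*A)) -
      fromBlocks (-(A*B - B*A)) (A*A + B*B) (-(A*A + B*B)) (-(A*B - B*A)) * fromBlocks A B B (-A) =
    fromBlocks
      (-(A*(A*B - B*A) - (A*B - B*A)*A) - (B*(A*A + B*B) + (A*A + B*B)*B))
      ((A*(A*A + B*B) + (A*A + B*B)*A) + ((A*B - B*A)*B - B*(A*B - B*A)))
      ((A*(A*A + B*B) + (A*A + B*B)*A) + ((A*B - B*A)*B - B*(A*B - B*A)))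
      (-(-(A*(A*B - B*A) - (A*B - B*A)*A) - (B*(A*A + B*B) + (A*A + B*B)*B))) := by
  simp only [fromBlocks_multiply, fromBlocks_smul, sub_eq_add_neg, fromBlocks_neg,
    fromBlocks_add, fromBlocks_inj]
  refine ⟨?_, ?_, ?_, ?_⟩ <;> noncomm_ring

private lemma assemble {n : ℕ} (A B P Q : Matrix (Fin n) (Fin n) ℂ)
    (a U W : Matrix (Fin n ⊕ Fin n) (Fin n ⊕ Fin n) ℂ)
    (ha : a = (1/2 : ℂ) • fromBlocks 0 (-1) 1 0)
    (hU : U = Complex.I • fromBlocks A B B (-A))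
    (hW : W = Complex.I • fromBlocks P Q Q (-P)) :
    (a * W - W * a)
      - (1/2 : ℂ) • (U * (U * (a * U - U * a) - (a * U - U * a) * U)
          - (U * (a * U - U * a) - (a * U - U * a) * U) * U)
    = Complex.I • fromBlocks
        (-Q - (A*(A*B - B*A) - (A*B - B*A)*A) - 2 • (B*B*B) - B*(A*A) - (A*A)*B)
        (P - (B*(A*B - B*A) - (A*B - B*A)*B) + 2 • (A*A*A) + A*(B*B) + (B*B)*A)
        (P - (B*(A*B - B*A) - (A*B - B*A)*B) + 2 • (A*A*A) + A*(B*B) + (B*B)*A)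
        (-(-Q - (A*(A*B - B*A) - (A*B - B*A)*A) - 2 • (B*B*B) - B*(A*A) - (A*A)*B)) := by
  set J : Matrix (Fin n ⊕ Fin n) (Fin n ⊕ Fin n) ℂ := fromBlocks 0 (-1) 1 0 with hJ
  set M : Matrix (Fin n ⊕ Fin n) (Fin n ⊕ Fin n) ℂ := fromBlocks A B B (-A) with hM
  set N : Matrix (Fin n ⊕ Fin n) (Fin n ⊕ Fin n) ℂ := fromBlocks (-B) A A B with hN
  set C : Matrix (Fin n) (Fin n) ℂ := A*B - B*A with hC
  set S : Matrix (Fin n) (Fin n) ℂ := A*A + B*B with hS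
  set P₀ : Matrix (Fin n ⊕ Fin n) (Fin n ⊕ Fin n) ℂ := fromBlocks (-C) S (-S) (-C) with hP₀
  have h1 : a * W - W * a = Complex.I • fromBlocks (-Q) P P Q := by
    rw [ha, hW, Matrix.smul_mul, Matrix.mul_smul, Matrix.mul_smul, Matrix.smul_mul,
      smul_smul, smul_smul, ← smul_sub, hJ, blk1, smul_smul]
    congr 1
    ring
  have h2 : a * U - U * a = Complex.I • N := by
    rw [ha, hU, Matrix.smul_mul, Matrix.mul_smul, Matrix.mul_smul, Matrix.smul_mul,
      smul_smul, smul_smul, ← smul_sub, hJ, hM, blk1, smul_smul, hN]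
    congr 1
    ring
  have h3 : U * (a * U - U * a) - (a * U - U * a) * U = (-2 : ℂ) • P₀ := by
    rw [h2, hU, Matrix.smul_mul, Matrix.mul_smul, Matrix.mul_smul, Matrix.smul_mul,
      smul_smul, smul_smul, ← smul_sub, hM, hN, blk2, smul_smul, hP₀, hC, hS]
    congr 1
    simp [Complex.I_mul_I]
  have h4 : U * ((-2 : ℂ) • P₀) - ((-2 : ℂ) • P₀) * U
      = (-2 * Complex.I) • fromBlocks
        (-(A*C - C*A) - (B*S + S*B)) ((A*S + S*A) + (C*B - B*C))
        ((A*S + S*A) + (C*B - B*C)) (-(-(A*C - C*A) - (B*S + S*B))) := by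
    rw [hU, Matrix.smul_mul, Matrix.mul_smul, Matrix.mul_smul, Matrix.smul_mul,
      smul_smul, smul_smul, ← smul_sub, hM, hP₀]
    simp only [hC, hS]
    rw [blk3]
    congr 1
    ring
  rw [h1, h3, h4, smul_smul,
    show (1/2 : ℂ) * (-2 * Complex.I) = -Complex.I by ring, neg_smul, sub_neg_eq_add,
    ← smul_add, fromBlocks_add]
  simp only [hC, hS]
  congr 1
  rw [fromBlocks_inj]
  refine ⟨?_, ?_, ?_, ?_⟩ <;> noncomm_ring

private noncomputable def Lblk (n : ℕ) :
    (Matrix (Fin n) (Fin n) ℝ × Matrix (Fin n) (Fin n) ℝ) →L[ℝ]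
      Matrix (Fin n ⊕ Fin n) (Fin n ⊕ Fin n) ℂ :=
  LinearMap.toContinuousLinearMap
  { toFun := fun p => Complex.I • (fromBlocks p.1 p.2 p.2 (-p.1)).map (Complex.ofReal)
    map_add' := by
      intro p q
      ext i j
      rcases i with i | i <;> rcases j with j | j <;>
        simp [Matrix.fromBlocks, Matrix.map_apply, Matrix.add_apply, Matrix.smul_apply,
          Matrix.neg_apply, mul_add] <;> ring
    map_smul' := by
      intro c p
      ext i j
      rcases i with i | i <;> rcases j with j | j <;>
        simp [Matrix.fromBlocks, Matrix.map_apply, Matrix.smul_apply, Matrix.neg_apply,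
          Complex.real_smul] <;> ring }

private lemma Lblk_apply2 (n : ℕ) (A B : Matrix (Fin n) (Fin n) ℝ) :
    Lblk n (A, B) = Complex.I • (fromBlocks A B B (-A)).map (Complex.ofReal) := rfl

private lemma Lblk_inj (n : ℕ) {p q : Matrix (Fin n) (Fin n) ℝ × Matrix (Fin n) (Fin n) ℝ}
    (h : Lblk n p = Lblk n q) : p = q := by
  have key : ∀ (i j : Fin n), p.1 i j = q.1 i j ∧ p.2 i j = q.2 i j := by
    intro i j
    have h1 := congrArg (fun M => M (Sum.inl i) (Sum.inl j)) h
    have h2 := congrArg (fun M => M (Sum.inl i) (Sum.inr j)) h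
    have hp : Lblk n p = Complex.I • (fromBlocks p.1 p.2 p.2 (-p.1)).map (Complex.ofReal) := rfl
    have hq : Lblk n q = Complex.I • (fromBlocks q.1 q.2 q.2 (-q.1)).map (Complex.ofReal) := rfl
    rw [hp, hq] at h1 h2
    simp only [Matrix.smul_apply, Matrix.map_apply, Matrix.fromBlocks_apply₁₁,
      Matrix.fromBlocks_apply₁₂, smul_eq_mul] at h1 h2
    constructor
    · exact_mod_cast mul_left_cancel₀ Complex.I_ne_zero h1
    · exact_mod_cast mul_left_cancel₀ Complex.I_ne_zero h2
  refine Prod.ext ?_ ?_ <;> ext i j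
  · exact (key i j).1
  · exact (key i j).2

private lemma deriv_clm_comp' {E F : Type*} [NormedAddCommGroup E] [NormedSpace ℝ E]
    [NormedAddCommGroup F] [NormedSpace ℝ F] (L : (E × E) →L[ℝ] F) {f g : ℝ → E} {t : ℝ}
    (hf : HasDerivAt f (deriv f t) t) (hg : HasDerivAt g (deriv g t) t) :
    deriv (fun s => L (f s, g s)) t = L (deriv f t, deriv g t) :=
  (L.hasFDerivAt.comp_hasDerivAt t (hf.prodMk hg)).deriv

private lemma mp1 {n : ℕ} (Z A B : Matrix (Fin n) (Fin n) ℝ) :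
    ((-Z - (A*(A*B - B*A) - (A*B - B*A)*A) - 2 • (B*B*B) - B*(A*A) - (A*A)*B).map
        Complex.ofReal)
      = -(Z.map Complex.ofReal)
        - ((A.map Complex.ofReal)*((A.map Complex.ofReal)*(B.map Complex.ofReal)
            - (B.map Complex.ofReal)*(A.map Complex.ofReal))
          - ((A.map Complex.ofReal)*(B.map Complex.ofReal)
            - (B.map Complex.ofReal)*(A.map Complex.ofReal))*(A.map Complex.ofReal))
        - 2 • ((B.map Complex.ofReal)*(B.map Complex.ofReal)*(B.map Complex.ofReal))
        - (B.map Complex.ofReal)*((A.map Complex.ofReal)*(A.map Complex.ofReal))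
        - ((A.map Complex.ofReal)*(A.map Complex.ofReal))*(B.map Complex.ofReal) := by
  rw [show (Complex.ofReal : ℝ → ℂ) = ⇑Complex.ofRealHom from rfl]
  simp only [← RingHom.mapMatrix_apply]
  simp only [map_sub, map_add, map_neg, map_nsmul, _root_.map_mul]

private lemma mp2 {n : ℕ} (Z A B : Matrix (Fin n) (Fin n) ℝ) :
    ((Z - (B*(A*B - B*A) - (A*B - B*A)*B) + 2 • (A*A*A) + A*(B*B) + (B*B)*A).map
        Complex.ofReal)
      = (Z.map Complex.ofReal)
        - ((B.map Complex.ofReal)*((A.map Complex.ofReal)*(B.map Complex.ofReal)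
            - (B.map Complex.ofReal)*(A.map Complex.ofReal))
          - ((A.map Complex.ofReal)*(B.map Complex.ofReal)
            - (B.map Complex.ofReal)*(A.map Complex.ofReal))*(B.map Complex.ofReal))
        + 2 • ((A.map Complex.ofReal)*(A.map Complex.ofReal)*(A.map Complex.ofReal))
        + (A.map Complex.ofReal)*((B.map Complex.ofReal)*(B.map Complex.ofReal))
        + ((B.map Complex.ofReal)*(B.map Complex.ofReal))*(A.map Complex.ofReal) := by
  rw [show (Complex.ofReal : ℝ → ℂ) = ⇑Complex.ofRealHom from rfl]
  simp only [← RingHom.mapMatrix_apply]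
  simp only [map_sub, map_add, map_neg, map_nsmul, _root_.map_mul]

private lemma hblk {n : ℕ} (P Q : Matrix (Fin n) (Fin n) ℝ) :
    (fromBlocks P Q Q (-P)).map (Complex.ofReal)
      = fromBlocks (P.map Complex.ofReal) (Q.map Complex.ofReal) (Q.map Complex.ofReal)
          (-(P.map Complex.ofReal)) := by
  have hneg : (-P).map (Complex.ofReal) = -(P.map Complex.ofReal) := by
    ext i j
    simp [Matrix.map_apply, Matrix.neg_apply]
  rw [fromBlocks_map, hneg]

/-- Let `n ≥ 1` and `a = (1/2)[[0, −I],[I, 0]] ∈ sp(n)`.  For smooth maps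
`X, Y : ℝ² → Sym(n,ℝ)` let `u = i[[X, Y],[Y, −X]]` (a purely imaginary element of
`sp(n)`).  Then `u` satisfies `u_t = [a, u_xx] − (1/2)[u,[u,[a,u]]]` iff
`X_t = −Y_xx − [X,[X,Y]] − 2Y³ − YX² − X²Y` and
`Y_t = X_xx − [Y,[X,Y]] + 2X³ + XY² + Y²X`. -/
theorem stmt_7 (n : ℕ) (hn : 1 ≤ n)
    (a : Matrix (Fin n ⊕ Fin n) (Fin n ⊕ Fin n) ℂ)
    (ha : a = (1 / 2 : ℂ) • Matrix.fromBlocks 0 (-1) 1 0)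
    (X Y : ℝ → ℝ → Matrix (Fin n) (Fin n) ℝ)
    (hX : ContDiff ℝ ∞ (Function.uncurry X))
    (hY : ContDiff ℝ ∞ (Function.uncurry Y))
    (hXsymm : ∀ x t : ℝ, (X x t)ᵀ = X x t)
    (hYsymm : ∀ x t : ℝ, (Y x t)ᵀ = Y x t)
    (u : ℝ → ℝ → Matrix (Fin n ⊕ Fin n) (Fin n ⊕ Fin n) ℂ)
    (hu : ∀ x t : ℝ, u x t
      = Complex.I •
          (Matrix.fromBlocks (X x t) (Y x t) (Y x t) (-(X x t))).map
            (Complex.ofReal)) :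
    (∀ x t : ℝ,
        deriv (fun s => u x s) t
          = (a * deriv (fun s => deriv (fun s' => u s' t) s) x
              - deriv (fun s => deriv (fun s' => u s' t) s) x * a)
            - (1 / 2 : ℂ) • (u x t * (u x t * (a * u x t - u x t * a)
                  - (a * u x t - u x t * a) * u x t)
                - (u x t * (a * u x t - u x t * a)
                  - (a * u x t - u x t * a) * u x t) * u x t))
      ↔ (∀ x t : ℝ,
          deriv (fun s => X x s) t
            = -(deriv (fun s => deriv (fun s' => Y s' t) s) x)
              - (X x t * (X x t * Y x t - Y x t * X x t)
                  - (X x t * Y x t - Y x t * X x t) * X x t)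
              - 2 • (Y x t * Y x t * Y x t)
              - Y x t * (X x t * X x t) - (X x t * X x t) * Y x t ∧
          deriv (fun s => Y x s) t
            = deriv (fun s => deriv (fun s' => X s' t) s) x
              - (Y x t * (X x t * Y x t - Y x t * X x t)
                  - (X x t * Y x t - Y x t * X x t) * Y x t)
              + 2 • (X x t * X x t * X x t)
              + X x t * (Y x t * Y x t) + (Y x t * Y x t) * X x t) := by
  have hXs : ∀ x : ℝ, ContDiff ℝ ∞ (fun s => X x s) := fun x =>
    hX.comp (contDiff_const.prodMk contDiff_id)
  have hYs : ∀ x : ℝ, ContDiff ℝ ∞ (fun s => Y x s) := fun x =>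
    hY.comp (contDiff_const.prodMk contDiff_id)
  have hXpart : ∀ x t : ℝ, HasDerivAt (fun s' => X s' t)
      (fderiv ℝ (Function.uncurry X) (x, t) (1, 0)) x := fun x t => by
    have h := ((hX.differentiable (by simp) (x, t)).hasFDerivAt).comp_hasDerivAt x
      ((hasDerivAt_id' x).prodMk (hasDerivAt_const x t))
    exact h
  have hYpart : ∀ x t : ℝ, HasDerivAt (fun s' => Y s' t)
      (fderiv ℝ (Function.uncurry Y) (x, t) (1, 0)) x := fun x t => by
    have h := ((hY.differentiable (by simp) (x, t)).hasFDerivAt).comp_hasDerivAt x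
      ((hasDerivAt_id' x).prodMk (hasDerivAt_const x t))
    exact h
  have D1 : ∀ x t : ℝ, deriv (fun s => u x s) t
      = Lblk n (deriv (fun s => X x s) t, deriv (fun s => Y x s) t) := by
    intro x t
    have hfun : (fun s => u x s) = fun s => Lblk n (X x s, Y x s) := by
      funext s; rw [hu x s, Lblk_apply2]
    rw [hfun]
    exact deriv_clm_comp' (Lblk n)
      (((hXs x).differentiable (by simp) t).hasDerivAt)
      (((hYs x).differentiable (by simp) t).hasDerivAt)
  have D2 : ∀ x t : ℝ, deriv (fun s => deriv (fun s' => u s' t) s) x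
      = Lblk n (deriv (fun s => deriv (fun s' => X s' t) s) x,
          deriv (fun s => deriv (fun s' => Y s' t) s) x) := by
    intro x t
    have inner : ∀ s : ℝ, deriv (fun s' => u s' t) s
        = Lblk n (deriv (fun s' => X s' t) s, deriv (fun s' => Y s' t) s) := by
      intro s
      have hfun : (fun s' => u s' t) = fun s' => Lblk n (X s' t, Y s' t) := by
        funext s'; rw [hu s' t, Lblk_apply2]
      rw [hfun]
      exact deriv_clm_comp' (Lblk n)
        ((hXpart s t).differentiableAt.hasDerivAt)
        ((hYpart s t).differentiableAt.hasDerivAt)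
    rw [funext inner]
    have eqX : (fun s => deriv (fun s' => X s' t) s)
        = fun s => fderiv ℝ (Function.uncurry X) (s, t) (1, 0) :=
      funext fun s => (hXpart s t).deriv
    have eqY : (fun s => deriv (fun s' => Y s' t) s)
        = fun s => fderiv ℝ (Function.uncurry Y) (s, t) (1, 0) :=
      funext fun s => (hYpart s t).deriv
    have hgX : ContDiff ℝ ∞ (fun s : ℝ => fderiv ℝ (Function.uncurry X) (s, t) (1, 0)) :=
      ((hX.fderiv_right (by simp)).comp (contDiff_id.prodMk contDiff_const)).clm_apply
        contDiff_const
    have hgY : ContDiff ℝ ∞ (fun s : ℝ => fderiv ℝ (Function.uncurry Y) (s, t) (1, 0)) :=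
      ((hY.fderiv_right (by simp)).comp (contDiff_id.prodMk contDiff_const)).clm_apply
        contDiff_const
    have dgX : DifferentiableAt ℝ (fun s => deriv (fun s' => X s' t) s) x := by
      rw [eqX]; exact (hgX.differentiable (by simp)) x
    have dgY : DifferentiableAt ℝ (fun s => deriv (fun s' => Y s' t) s) x := by
      rw [eqY]; exact (hgY.differentiable (by simp)) x
    exact deriv_clm_comp' (Lblk n) dgX.hasDerivAt dgY.hasDerivAt
  refine forall_congr' fun x => forall_congr' fun t => ?_
  rw [D1 x t, D2 x t,
    Lblk_apply2 n (deriv (fun s => deriv (fun s' => X s' t) s) x)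
      (deriv (fun s => deriv (fun s' => Y s' t) s) x),
    hu x t, ha]
  simp only [hblk]
  rw [assemble ((X x t).map Complex.ofReal) ((Y x t).map Complex.ofReal)
      ((deriv (fun s => deriv (fun s' => X s' t) s) x).map Complex.ofReal)
      ((deriv (fun s => deriv (fun s' => Y s' t) s) x).map Complex.ofReal)
      _ _ _ rfl rfl rfl]
  rw [show Complex.I • fromBlocks
        (-((deriv (fun s => deriv (fun s' => Y s' t) s) x).map Complex.ofReal)
          - ((X x t).map Complex.ofReal * ((X x t).map Complex.ofReal * (Y x t).map Complex.ofReal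
              - (Y x t).map Complex.ofReal * (X x t).map Complex.ofReal)
            - ((X x t).map Complex.ofReal * (Y x t).map Complex.ofReal
              - (Y x t).map Complex.ofReal * (X x t).map Complex.ofReal) * (X x t).map Complex.ofReal)
          - 2 • ((Y x t).map Complex.ofReal * (Y x t).map Complex.ofReal * (Y x t).map Complex.ofReal)
          - (Y x t).map Complex.ofReal * ((X x t).map Complex.ofReal * (X x t).map Complex.ofReal)
          - ((X x t).map Complex.ofReal * (X x t).map Complex.ofReal) * (Y x t).map Complex.ofReal)
        ((deriv (fun s => deriv (fun s' => X s' t) s) x).map Complex.ofReal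
          - ((Y x t).map Complex.ofReal * ((X x t).map Complex.ofReal * (Y x t).map Complex.ofReal
              - (Y x t).map Complex.ofReal * (X x t).map Complex.ofReal)
            - ((X x t).map Complex.ofReal * (Y x t).map Complex.ofReal
              - (Y x t).map Complex.ofReal * (X x t).map Complex.ofReal) * (Y x t).map Complex.ofReal)
          + 2 • ((X x t).map Complex.ofReal * (X x t).map Complex.ofReal * (X x t).map Complex.ofReal)
          + (X x t).map Complex.ofReal * ((Y x t).map Complex.ofReal * (Y x t).map Complex.ofReal)
          + ((Y x t).map Complex.ofReal * (Y x t).map Complex.ofReal) * (X x t).map Complex.ofReal)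
        ((deriv (fun s => deriv (fun s' => X s' t) s) x).map Complex.ofReal
          - ((Y x t).map Complex.ofReal * ((X x t).map Complex.ofReal * (Y x t).map Complex.ofReal
              - (Y x t).map Complex.ofReal * (X x t).map Complex.ofReal)
            - ((X x t).map Complex.ofReal * (Y x t).map Complex.ofReal
              - (Y x t).map Complex.ofReal * (X x t).map Complex.ofReal) * (Y x t).map Complex.ofReal)
          + 2 • ((X x t).map Complex.ofReal * (X x t).map Complex.ofReal * (X x t).map Complex.ofReal)
          + (X x t).map Complex.ofReal * ((Y x t).map Complex.ofReal * (Y x t).map Complex.ofReal)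
          + ((Y x t).map Complex.ofReal * (Y x t).map Complex.ofReal) * (X x t).map Complex.ofReal)
        (-(-((deriv (fun s => deriv (fun s' => Y s' t) s) x).map Complex.ofReal)
          - ((X x t).map Complex.ofReal * ((X x t).map Complex.ofReal * (Y x t).map Complex.ofReal
              - (Y x t).map Complex.ofReal * (X x t).map Complex.ofReal)
            - ((X x t).map Complex.ofReal * (Y x t).map Complex.ofReal
              - (Y x t).map Complex.ofReal * (X x t).map Complex.ofReal) * (X x t).map Complex.ofReal)
          - 2 • ((Y x t).map Complex.ofReal * (Y x t).map Complex.ofReal * (Y x t).map Complex.ofReal)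
          - (Y x t).map Complex.ofReal * ((X x t).map Complex.ofReal * (X x t).map Complex.ofReal)
          - ((X x t).map Complex.ofReal * (X x t).map Complex.ofReal) * (Y x t).map Complex.ofReal))
      = Lblk n
        (-(deriv (fun s => deriv (fun s' => Y s' t) s) x)
            - (X x t * (X x t * Y x t - Y x t * X x t)
                - (X x t * Y x t - Y x t * X x t) * X x t)
            - 2 • (Y x t * Y x t * Y x t)
            - Y x t * (X x t * X x t) - (X x t * X x t) * Y x t,
          deriv (fun s => deriv (fun s' => X s' t) s) x
            - (Y x t * (X x t * Y x t - Y x t * X x t)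
                - (X x t * Y x t - Y x t * X x t) * Y x t)
            + 2 • (X x t * X x t * X x t)
            + X x t * (Y x t * Y x t) + (Y x t * Y x t) * X x t) from by
    rw [Lblk_apply2, hblk, mp1, mp2]]
  constructor
  · intro h
    have h2 := Lblk_inj n h
    exact ⟨congrArg Prod.fst h2, congrArg Prod.snd h2⟩
  · rintro ⟨h1, h2⟩
    rw [h1, h2]
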